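/- arXiv:1512.01113 — 4 statements merged into one kernel-verified Lean document; each statement's English description precedes it below -/
import Mathlib

section
/- Let G be a finite simple graph and let f be an injective function assigning to each vertex of G a nonempty finite set of non-negative integers. Then f is a weak integer additive set-labeling of G (i.e., for every edge uv of G, |f(u) + f(v)| = |f(u)| or |f(u) + f(v)| = |f(v)|) if and only if for every edge uv of G at least one of the end vertices u, v is mono-indexed (i.e., |f(u)| = 1 or |f(v)| = 1). -/
open Pointwise

/-!
By the Cauchy–Davenport inequality `#s + #t - 1 ≤ #(s + t)` for nonempty finite sets in a
linearly ordered cancellative semigroup, a sumset can have the size of one summand only if the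
other summand is a singleton; conversely, adding a singleton is a translation.
-/

namespace Finset

variable {α : Type*} [LinearOrder α] [Add α] [IsCancelAdd α] [AddLeftMono α] [AddRightMono α]
  {s t : Finset α}

theorem card_add_eq_card_left_iff (hs : s.Nonempty) (ht : t.Nonempty) :
    #(s + t) = #s ↔ #t = 1 := by
  refine ⟨fun h ↦ ?_, fun h ↦ ?_⟩
  · have : #s + #t - 1 ≤ #(s + t) := cauchy_davenport_add_of_linearOrder_isCancelAdd hs ht
    have := ht.card_pos
    omega
  · obtain ⟨a, rfl⟩ := card_eq_one.1 h
    exact card_add_singleton s a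

theorem card_add_eq_card_right_iff (hs : s.Nonempty) (ht : t.Nonempty) :
    #(s + t) = #t ↔ #s = 1 := by
  refine ⟨fun h ↦ ?_, fun h ↦ ?_⟩
  · have : #s + #t - 1 ≤ #(s + t) := cauchy_davenport_add_of_linearOrder_isCancelAdd hs ht
    have := hs.card_pos
    omega
  · obtain ⟨a, rfl⟩ := card_eq_one.1 h
    exact card_singleton_add a t

theorem card_add_eq_card_left_or_right_iff (hs : s.Nonempty) (ht : t.Nonempty) :
    #(s + t) = #s ∨ #(s + t) = #t ↔ #s = 1 ∨ #t = 1 := by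
  rw [card_add_eq_card_left_iff hs ht, card_add_eq_card_right_iff hs ht, or_comm]

end Finset

theorem weak_IASL_iff_mono_indexed_end_general {V : Type*} (G : SimpleGraph V)
    (f : V → Finset ℕ) (hne : ∀ v, (f v).Nonempty) :
    (∀ u v, G.Adj u v →
        ((f u + f v).card = (f u).card ∨ (f u + f v).card = (f v).card)) ↔
      (∀ u v, G.Adj u v → ((f u).card = 1 ∨ (f v).card = 1)) := by
  simp only [Finset.card_add_eq_card_left_or_right_iff (hne _) (hne _)]

theorem weak_IASL_iff_mono_indexed_end {V : Type*} [Fintype V] (G : SimpleGraph V)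
    (f : V → Finset ℕ) (hinj : Function.Injective f) (hne : ∀ v, (f v).Nonempty) :
    (∀ u v, G.Adj u v →
        ((f u + f v).card = (f u).card ∨ (f u + f v).card = (f v).card)) ↔
      (∀ u v, G.Adj u v → ((f u).card = 1 ∨ (f v).card = 1)) :=
  weak_IASL_iff_mono_indexed_end_general G f hne
end

section
/- Let G be a finite simple graph and let f be a weak integer additive set-labeling of G. Then the set I = {v ∈ V(G) : |f(v)| ≥ 2} of vertices with non-singleton set-labels is an independent set in G. -/
open Pointwise Finset

/-- By Cauchy–Davenport, `#(s + t) ≥ #s + #t - 1`, so the sumset can only be as small as one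
of its summands when the other summand is a singleton. -/
theorem Finset.card_eq_one_or_card_eq_one_of_card_add_eq {α : Type*} [LinearOrder α] [Add α]
    [IsCancelAdd α] [AddLeftMono α] [AddRightMono α] {s t : Finset α}
    (hs : s.Nonempty) (ht : t.Nonempty) (h : #(s + t) = #s ∨ #(s + t) = #t) :
    #s = 1 ∨ #t = 1 := by
  have := cauchy_davenport_add_of_linearOrder_isCancelAdd hs ht
  have := hs.card_pos
  have := ht.card_pos
  omega

theorem nonsingleton_vertices_independent_general {V : Type*} (G : SimpleGraph V)
    (f : V → Finset ℕ) (hne : ∀ v, (f v).Nonempty)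
    (hweak : ∀ u v, G.Adj u v →
      ((f u + f v).card = (f u).card ∨ (f u + f v).card = (f v).card)) :
    ∀ u ∈ {v : V | 2 ≤ (f v).card}, ∀ w ∈ {v : V | 2 ≤ (f v).card}, ¬ G.Adj u w := by
  intro u (hu : 2 ≤ #(f u)) w (hw : 2 ≤ #(f w)) hadj
  have := card_eq_one_or_card_eq_one_of_card_add_eq (hne u) (hne w) (hweak u w hadj)
  omega

theorem nonsingleton_vertices_independent {V : Type*} [Fintype V] (G : SimpleGraph V)
    (f : V → Finset ℕ) (hinj : Function.Injective f) (hne : ∀ v, (f v).Nonempty)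
    (hweak : ∀ u v, G.Adj u v →
      ((f u + f v).card = (f u).card ∨ (f u + f v).card = (f v).card)) :
    ∀ u ∈ {v : V | 2 ≤ (f v).card}, ∀ w ∈ {v : V | 2 ≤ (f v).card}, ¬ G.Adj u w :=
  nonsingleton_vertices_independent_general G f hne hweak
end

section
/- Let G be a finite simple graph and let I be any independent set of vertices of G. Then there exists a weak integer additive set-labeling f of G whose mono-indexed edges are exactly the edges of G with no end vertex in I; consequently, the sparing number of G satisfies φ(G) ≤ |E(G − I)|, the number of edges of G with no end vertex in I. -/
/-!
Label the vertices of `I` by two-element sets and all other vertices by singletons, all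
labels pairwise disjoint. Adding a singleton to a set does not change its size, so every edge
with an end outside `I` is weak, and `I` being independent, so is every edge. A sumset of
nonempty sets is a singleton exactly when both summands are, so the mono-indexed edges are
those with both ends outside `I`.
-/

open Pointwise

def IsWeakIASL {V : Type*} (G : SimpleGraph V) (f : V → Finset ℕ) : Prop :=
  Function.Injective f ∧ (∀ v, (f v).Nonempty) ∧
    ∀ u v, G.Adj u v →
      ((f u + f v).card = (f u).card ∨ (f u + f v).card = (f v).card)

def monoEdgeSet {V : Type*} (G : SimpleGraph V) (f : V → Finset ℕ) : Set (Sym2 V) :=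
  {e | e ∈ G.edgeSet ∧ ∃ u v, e = s(u, v) ∧ (f u + f v).card = 1}

noncomputable def sparingNumber {V : Type*} (G : SimpleGraph V) : ℕ :=
  sInf {n | ∃ f : V → Finset ℕ, IsWeakIASL G f ∧ (monoEdgeSet G f).ncard = n}

lemma Finset.card_add_eq_one_iff {α : Type*} [DecidableEq α] [Add α] [IsCancelAdd α]
    {s t : Finset α} (hs : s.Nonempty) (ht : t.Nonempty) :
    (s + t).card = 1 ↔ s.card = 1 ∧ t.card = 1 := by
  constructor
  · intro h
    have := card_le_card_add_right (s := s) ht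
    have := card_le_card_add_left (t := t) hs
    have := hs.card_pos
    have := ht.card_pos
    omega
  · rintro ⟨hs₁, ht₁⟩
    obtain ⟨a, rfl⟩ := card_eq_one.mp hs₁
    obtain ⟨b, rfl⟩ := card_eq_one.mp ht₁
    rw [singleton_add_singleton, card_singleton]

section Labelings

variable {V : Type*} (G : SimpleGraph V) {f : V → Finset ℕ}

lemma isWeakIASL_of_adj_card_eq_one (hinj : Function.Injective f)
    (hne : ∀ v, (f v).Nonempty)
    (hadj : ∀ u v, G.Adj u v → (f u).card = 1 ∨ (f v).card = 1) :
    IsWeakIASL G f := by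
  refine ⟨hinj, hne, fun u v huv => ?_⟩
  rcases hadj u v huv with hu | hv
  · obtain ⟨a, ha⟩ := Finset.card_eq_one.mp hu
    exact Or.inr (by rw [ha, Finset.card_singleton_add])
  · obtain ⟨b, hb⟩ := Finset.card_eq_one.mp hv
    exact Or.inl (by rw [hb, Finset.card_add_singleton])

lemma monoEdgeSet_eq_of_nonempty (hne : ∀ v, (f v).Nonempty) :
    monoEdgeSet G f = {e | e ∈ G.edgeSet ∧ ∀ v ∈ e, (f v).card = 1} := by
  ext e
  induction e using Sym2.ind with
  | _ a b =>
    simp only [monoEdgeSet, Set.mem_ofPred_eq, Sym2.mem_iff, forall_eq_or_imp, forall_eq]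
    refine and_congr_right fun _ => ⟨?_, fun h => ⟨a, b, rfl, ?_⟩⟩
    · rintro ⟨u, v, huv, hc⟩
      have huv' := (Finset.card_add_eq_one_iff (hne u) (hne v)).mp hc
      rcases Sym2.eq_iff.mp huv with ⟨rfl, rfl⟩ | ⟨rfl, rfl⟩
      exacts [huv', huv'.symm]
    · exact (Finset.card_add_eq_one_iff (hne a) (hne b)).mpr h

lemma sparingNumber_le_ncard_monoEdgeSet (hf : IsWeakIASL G f) :
    sparingNumber G ≤ (monoEdgeSet G f).ncard :=
  Nat.sInf_le ⟨f, hf, rfl⟩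

end Labelings

section IntervalLabel

variable {V : Type*} (ι : V → ℕ) (I : Set V) [DecidablePred (· ∈ I)]

def intervalLabel (v : V) : Finset ℕ :=
  Finset.Icc (2 * ι v) (2 * ι v + if v ∈ I then 1 else 0)

variable {ι}

lemma intervalLabel_nonempty (v : V) : (intervalLabel ι I v).Nonempty :=
  Finset.nonempty_Icc.mpr (Nat.le_add_right _ _)

lemma div_two_eq_of_mem_intervalLabel {v : V} {n : ℕ} (hn : n ∈ intervalLabel ι I v) :
    n / 2 = ι v := by
  simp only [intervalLabel, Finset.mem_Icc] at hn
  split_ifs at hn <;> omega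

lemma intervalLabel_injective (hι : Function.Injective ι) :
    Function.Injective (intervalLabel ι I) := fun a b hab => by
  obtain ⟨n, hn⟩ := intervalLabel_nonempty I a
  exact hι <| (div_two_eq_of_mem_intervalLabel I hn).symm.trans
    (div_two_eq_of_mem_intervalLabel I (hab ▸ hn))

lemma card_intervalLabel_eq_one_iff (v : V) : (intervalLabel ι I v).card = 1 ↔ v ∉ I := by
  simp only [intervalLabel, Nat.card_Icc, add_assoc, Nat.add_sub_cancel_left]
  split_ifs <;> simp_all

end IntervalLabel

theorem exists_weak_IASL_mono_edges_eq {V : Type*} [Fintype V] (G : SimpleGraph V)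
    (I : Set V) (hI : ∀ u ∈ I, ∀ v ∈ I, ¬ G.Adj u v) :
    (∃ f : V → Finset ℕ, IsWeakIASL G f ∧
        monoEdgeSet G f = {e | e ∈ G.edgeSet ∧ ∀ v ∈ e, v ∉ I}) ∧
      sparingNumber G ≤ {e | e ∈ G.edgeSet ∧ ∀ v ∈ e, v ∉ I}.ncard := by
  classical
  let ι : V → ℕ := fun v => Fintype.equivFin V v
  have hι : Function.Injective ι := Fin.val_injective.comp (Fintype.equivFin V).injective
  have hweak : IsWeakIASL G (intervalLabel ι I) := by
    refine isWeakIASL_of_adj_card_eq_one G (intervalLabel_injective I hι)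
      (intervalLabel_nonempty I) fun u v huv => ?_
    simp only [card_intervalLabel_eq_one_iff]
    by_contra! h
    exact hI u h.1 v h.2 huv
  have hmono : monoEdgeSet G (intervalLabel ι I) = {e | e ∈ G.edgeSet ∧ ∀ v ∈ e, v ∉ I} := by
    simp only [monoEdgeSet_eq_of_nonempty G (intervalLabel_nonempty I),
      card_intervalLabel_eq_one_iff]
  exact ⟨⟨_, hweak, hmono⟩, hmono ▸ sparingNumber_le_ncard_monoEdgeSet G hweak⟩
end

section
/- Let G be a finite simple graph and let f be any weak integer additive set-labeling of G. Then the number of mono-indexed edges of G under f is at least the minimum, over all independent sets I of G, of the number of edges of G with no end vertex in I. -/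
open Pointwise

/-! By Cauchy–Davenport, `|f u + f v| ≥ |f u| + |f v| - 1`, so the weak condition on an edge `uv`
forces one of its ends to carry a singleton. Hence the vertices with non-singleton labels form an
independent set `I`, and every edge avoiding `I` joins two singletons, so it is mono-indexed. -/

namespace Finset

variable {α : Type*}

theorem card_eq_one_of_card_add_eq_card_left [LinearOrder α] [Add α] [IsCancelAdd α]
    [AddLeftMono α] [AddRightMono α] {s t : Finset α} (hs : s.Nonempty) (ht : t.Nonempty)
    (h : (s + t).card = s.card) : t.card = 1 := by
  have := cauchy_davenport_add_of_linearOrder_isCancelAdd hs ht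
  have := ht.card_pos
  omega

theorem card_eq_one_of_card_add_eq_card_right [LinearOrder α] [Add α] [IsCancelAdd α]
    [AddLeftMono α] [AddRightMono α] {s t : Finset α} (hs : s.Nonempty) (ht : t.Nonempty)
    (h : (s + t).card = t.card) : s.card = 1 := by
  have := cauchy_davenport_add_of_linearOrder_isCancelAdd hs ht
  have := hs.card_pos
  omega

theorem card_add_eq_one [DecidableEq α] [Add α] {s t : Finset α} (hs : s.card = 1)
    (ht : t.card = 1) : (s + t).card = 1 := by
  obtain ⟨a, rfl⟩ := card_eq_one.1 hs
  obtain ⟨b, rfl⟩ := card_eq_one.1 ht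
  rw [singleton_add_singleton, card_singleton]

end Finset

section

variable {V : Type*} {G : SimpleGraph V} {f : V → Finset ℕ}

theorem IsWeakIASL.card_eq_one_or_card_eq_one_of_adj (hf : IsWeakIASL G f) {u v : V}
    (huv : G.Adj u v) : (f u).card = 1 ∨ (f v).card = 1 := by
  obtain ⟨-, hne, hweak⟩ := hf
  rcases hweak u v huv with h | h
  · exact .inr (Finset.card_eq_one_of_card_add_eq_card_left (hne u) (hne v) h)
  · exact .inl (Finset.card_eq_one_of_card_add_eq_card_right (hne u) (hne v) h)

theorem IsWeakIASL.not_adj_of_card_ne_one (hf : IsWeakIASL G f) :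
    ∀ u ∈ {w | (f w).card ≠ 1}, ∀ v ∈ {w | (f w).card ≠ 1}, ¬ G.Adj u v :=
  fun _ hu _ hv huv => (hf.card_eq_one_or_card_eq_one_of_adj huv).elim hu hv

theorem setOf_edge_card_eq_one_subset_monoEdgeSet :
    {e | e ∈ G.edgeSet ∧ ∀ v ∈ e, (f v).card = 1} ⊆ monoEdgeSet G f := by
  rintro e ⟨he, hcard⟩
  induction e using Sym2.ind with
  | _ u v =>
    exact ⟨he, u, v, rfl,
      Finset.card_add_eq_one (hcard u (Sym2.mem_mk_left u v)) (hcard v (Sym2.mem_mk_right u v))⟩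

end

theorem mono_edges_ge_min_over_indep {V : Type*} [Fintype V] (G : SimpleGraph V)
    (f : V → Finset ℕ) (hf : IsWeakIASL G f) :
    sInf {n | ∃ I : Set V, (∀ u ∈ I, ∀ v ∈ I, ¬ G.Adj u v) ∧
        {e | e ∈ G.edgeSet ∧ ∀ v ∈ e, v ∉ I}.ncard = n} ≤
      (monoEdgeSet G f).ncard := by
  set I : Set V := {w | (f w).card ≠ 1}
  calc sInf {n | ∃ I : Set V, (∀ u ∈ I, ∀ v ∈ I, ¬ G.Adj u v) ∧
          {e | e ∈ G.edgeSet ∧ ∀ v ∈ e, v ∉ I}.ncard = n}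
      ≤ {e | e ∈ G.edgeSet ∧ ∀ v ∈ e, v ∉ I}.ncard :=
        Nat.sInf_le ⟨I, hf.not_adj_of_card_ne_one, rfl⟩
    _ ≤ (monoEdgeSet G f).ncard :=
        Set.ncard_le_ncard
          (fun e he => setOf_edge_card_eq_one_subset_monoEdgeSet
            ⟨he.1, fun v hv => not_not.1 (he.2 v hv)⟩)
          (Set.toFinite _)
end
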